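/- arXiv:1108.5305 — 6 statements merged into one kernel-verified Lean document; each statement's English description precedes it below -/
import Mathlib

section
/- For every x=(x₂,x₃)∈ℝ² one has −(1/(4√2·π))·(∫₁^∞ e^{−2π r x₃²}·r^{−3/2} dr)·e^{−π(x₂²−x₃²)} = −(1/(2√2·π))·e^{−π(x₂²+x₃²)} + (1/(2√π))·|x₃|·Γ(1/2, 2πx₃²)·e^{−π(x₂²−x₃²)}. Equivalently, the e₃-component B(x) of the singular Schwartz function ψ̃₀,₁, defined by B(x) = −(∫₁^∞ (1/(4√2·π))·e^{−2π r x₃²}·r^{−3/2} dr)·e^{−π(x₂²−x₃²)}, equals the stated closed form. (Paper Lemma 5.4, formula for B.) -/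
/-!
Integrating by parts against the antiderivative `-2 e^{-cr} r^{-1/2}` turns
`∫₁^∞ e^{-cr} r^{-3/2} dr` into `2e^{-c} - 2c ∫₁^∞ e^{-cr} r^{-1/2} dr`, and the substitution
`u = cr` identifies the last integral with `c^{-1/2} Γ(1/2, c)`. With `c = 2πx₃²` one has
`√c = √(2π)|x₃|` and `e^{-c} e^{-π(x₂²-x₃²)} = e^{-π(x₂²+x₃²)}`.
-/

open MeasureTheory

/-- The upper incomplete gamma function `Γ(1/2, a) = ∫_a^∞ e^{-u} u^{-1/2} du`. -/
noncomputable def Ginc (a : ℝ) : ℝ := ∫ u in Set.Ioi a, Real.exp (-u) * u ^ (-(1:ℝ)/2)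

open Set Filter Topology Real

lemma integrableOn_exp_neg_mul_mul_rpow_Ioi_one {c s : ℝ} (hc : 0 < c) (hs : s ≤ 0) :
    IntegrableOn (fun r : ℝ => exp (-(c * r)) * r ^ s) (Ioi 1) := by
  refine (exp_neg_integrableOn_Ioi 1 hc).mono' (by fun_prop) ?_
  filter_upwards [ae_restrict_mem measurableSet_Ioi] with r (hr : 1 < r)
  have hr_pow : r ^ s ≤ 1 := rpow_le_one_of_one_le_of_nonpos hr.le hs
  rw [norm_mul, norm_of_nonneg (exp_pos _).le, norm_of_nonneg (rpow_nonneg (by linarith) _),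
    neg_mul]
  exact mul_le_of_le_one_right (exp_pos _).le hr_pow

lemma mul_integral_exp_neg_mul_mul_rpow_sub_one_Ioi_one {c s : ℝ} (hc : 0 < c) (hs : s < 0) :
    s * ∫ r in Ioi (1:ℝ), exp (-(c * r)) * r ^ (s - 1)
      = c * (∫ r in Ioi (1:ℝ), exp (-(c * r)) * r ^ s) - exp (-c) := by
  have hderiv : ∀ r ∈ Ioi (1:ℝ), HasDerivAt (fun r => exp (-(c * r)) * r ^ s)
      (s * (exp (-(c * r)) * r ^ (s - 1)) - c * (exp (-(c * r)) * r ^ s)) r := by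
    intro r (hr : 1 < r)
    have he : HasDerivAt (fun r : ℝ => exp (-(c * r))) (exp (-(c * r)) * -(c * 1)) r :=
      ((hasDerivAt_id r).const_mul c).neg.exp
    exact (he.fun_mul (hasDerivAt_rpow_const (Or.inl (by linarith)))).congr_deriv (by ring)
  have hcont : ContinuousWithinAt (fun r : ℝ => exp (-(c * r)) * r ^ s) (Ici 1) 1 :=
    (by fun_prop : Continuous fun r : ℝ => exp (-(c * r))).continuousAt.mul
      (continuousAt_rpow_const 1 s (Or.inl one_ne_zero)) |>.continuousWithinAt
  have htend : Tendsto (fun r : ℝ => exp (-(c * r)) * r ^ s) atTop (𝓝 0) := by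
    have hexp : Tendsto (fun r : ℝ => exp (-(c * r))) atTop (𝓝 0) :=
      tendsto_exp_neg_atTop_nhds_zero.comp (tendsto_id.const_mul_atTop hc)
    simpa using hexp.mul (by simpa using tendsto_rpow_neg_atTop (neg_pos.2 hs))
  have hint₁ := integrableOn_exp_neg_mul_mul_rpow_Ioi_one hc (by linarith : s - 1 ≤ 0)
  have hint₀ := integrableOn_exp_neg_mul_mul_rpow_Ioi_one hc hs.le
  have hftc := integral_Ioi_of_hasDerivAt_of_tendsto hcont hderiv
    ((hint₁.const_mul s).sub (hint₀.const_mul c)) htend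
  rw [integral_sub (hint₁.const_mul s) (hint₀.const_mul c), integral_const_mul,
    integral_const_mul] at hftc
  simp only [mul_one, one_rpow] at hftc
  linarith

lemma rpow_mul_integral_exp_neg_mul_mul_rpow_Ioi {c : ℝ} (hc : 0 < c) (a s : ℝ) (ha : 0 ≤ a) :
    c ^ (s + 1) * ∫ r in Ioi a, exp (-(c * r)) * r ^ s
      = ∫ u in Ioi (c * a), exp (-u) * u ^ s := by
  have hsubst := integral_comp_mul_left_Ioi (fun u => exp (-u) * u ^ s) a hc
  rw [smul_eq_mul, eq_inv_mul_iff_mul_eq₀ hc.ne'] at hsubst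
  rw [← hsubst, ← integral_const_mul, ← integral_const_mul]
  refine setIntegral_congr_fun measurableSet_Ioi fun r (hr : a < r) => ?_
  rw [mul_rpow hc.le (by linarith), rpow_add_one hc.ne']
  ring

lemma integral_exp_neg_mul_mul_rpow_neg_three_halves_Ioi_one {c : ℝ} (hc : 0 ≤ c) :
    ∫ r in Ioi (1:ℝ), exp (-(c * r)) * r ^ (-(3:ℝ)/2) = 2 * exp (-c) - 2 * √c * Ginc c := by
  rcases hc.eq_or_lt with rfl | hc_pos
  · simp only [zero_mul, neg_zero, exp_zero, one_mul, sqrt_zero, mul_zero, zero_mul, sub_zero]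
    rw [integral_Ioi_rpow_of_lt (by norm_num) one_pos]
    norm_num
  have hparts :=
    mul_integral_exp_neg_mul_mul_rpow_sub_one_Ioi_one hc_pos (s := -(1:ℝ)/2) (by norm_num)
  have hsubst := rpow_mul_integral_exp_neg_mul_mul_rpow_Ioi hc_pos 1 (-(1:ℝ)/2) zero_le_one
  rw [mul_one, ← Ginc, show -(1:ℝ)/2 + 1 = 1/2 by norm_num, ← sqrt_eq_rpow] at hsubst
  have hsqrt : √c * √c = c := mul_self_sqrt hc
  rw [show -(1:ℝ)/2 - 1 = -(3:ℝ)/2 by norm_num] at hparts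
  generalize ∫ r in Ioi (1:ℝ), exp (-(c * r)) * r ^ (-(1:ℝ)/2) = I at hparts hsubst
  linear_combination (-2) * hparts - 2 * √c * hsubst + 2 * I * hsqrt

/-- Paper Lemma 5.4, formula for the `e₃`-component `B` of the singular Schwartz
function `ψ̃₀,₁`:
`-(1/(4√2π))·(∫₁^∞ e^{-2πrx₃²} r^{-3/2} dr)·e^{-π(x₂²-x₃²)}
  = -(1/(2√2π))·e^{-π(x₂²+x₃²)} + (1/(2√π))·|x₃|·Γ(1/2,2πx₃²)·e^{-π(x₂²-x₃²)}`. -/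
theorem stmt1 (x₂ x₃ : ℝ) :
    -(1 / (4 * Real.sqrt 2 * Real.pi)) *
      (∫ r in Set.Ioi (1:ℝ), Real.exp (-(2 * Real.pi * r * x₃ ^ 2)) * r ^ (-(3:ℝ)/2)) *
      Real.exp (-(Real.pi * (x₂ ^ 2 - x₃ ^ 2)))
    = -(1 / (2 * Real.sqrt 2 * Real.pi)) * Real.exp (-(Real.pi * (x₂ ^ 2 + x₃ ^ 2)))
      + (1 / (2 * Real.sqrt Real.pi)) * |x₃| * Ginc (2 * Real.pi * x₃ ^ 2) *
        Real.exp (-(Real.pi * (x₂ ^ 2 - x₃ ^ 2))) := by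
  have hintegrand : (fun r : ℝ => exp (-(2 * π * r * x₃ ^ 2)) * r ^ (-(3:ℝ)/2))
      = fun r => exp (-(2 * π * x₃ ^ 2 * r)) * r ^ (-(3:ℝ)/2) := by
    ext r; ring_nf
  have hsqrt : √(2 * π * x₃ ^ 2) = √2 * √π * |x₃| := by
    rw [sqrt_mul (by positivity), sqrt_sq_eq_abs, sqrt_mul zero_le_two]
  have hexp : exp (-(π * (x₂ ^ 2 + x₃ ^ 2)))
      = exp (-(2 * π * x₃ ^ 2)) * exp (-(π * (x₂ ^ 2 - x₃ ^ 2))) := by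
    rw [← exp_add]; ring_nf
  have hπ : √π * √π = π := mul_self_sqrt pi_pos.le
  have hπ₀ : √π ≠ 0 := (sqrt_pos.2 pi_pos).ne'
  rw [hintegrand, integral_exp_neg_mul_mul_rpow_neg_three_halves_Ioi_one (by positivity), hsqrt,
    hexp]
  generalize Ginc (2 * π * x₃ ^ 2) = G
  field_simp
  linear_combination 4 * √2 * |x₃| * G * hπ
end

section
/- The function x ↦ B(x) − (1/2)·|x₃|·e^{−π(x₂²−x₃²)} is twice continuously differentiable (C²) on all of ℝ². (Paper Lemma 5.5(i).) -/
/-!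
Substituting `u = b v²` in the incomplete gamma integral gives
`Γ(1/2, 2π t²) = √π - 2√(2π) ∫₀^|t| e^{-2πv²} dv`. Hence the singular part of `B` minus
`|x₃|/2` equals `-√2 x₃ ∫₀^{x₃} e^{-2πv²} dv` (the absolute values cancel since the Gaussian
primitive is odd), and the difference is a product of smooth functions.
-/

open MeasureTheory

/-- The `e₃`-component `B` of the singular Schwartz function `ψ̃₀,₁`. -/
noncomputable def B (x : ℝ × ℝ) : ℝ :=
  -(1 / (2 * Real.sqrt 2 * Real.pi)) * Real.exp (-(Real.pi * (x.1 ^ 2 + x.2 ^ 2)))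
  + (1 / (2 * Real.sqrt Real.pi)) * |x.2| * Ginc (2 * Real.pi * x.2 ^ 2) *
      Real.exp (-(Real.pi * (x.1 ^ 2 - x.2 ^ 2)))

open Real Set

theorem Ginc_eq_two_mul_integral_Ioi_sqrt {a : ℝ} (ha : 0 ≤ a) :
    Ginc a = 2 * ∫ x in Ioi √a, exp (-x ^ 2) := by
  rw [Ginc, ← integral_comp_rpow_Ioi_of_pos' two_pos ha, ← one_div, ← sqrt_eq_rpow,
    ← integral_const_mul]
  refine setIntegral_congr_fun measurableSet_Ioi fun x hx ↦ ?_
  have hx : 0 < x := (sqrt_nonneg a).trans_lt hx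
  have hpow : (x ^ (2 : ℝ)) ^ (-(1 : ℝ) / 2) = x⁻¹ := by
    rw [← rpow_mul hx.le]; norm_num [rpow_neg_one]
  rw [hpow, smul_eq_mul, rpow_two, show (2 : ℝ) - 1 = 1 by norm_num, rpow_one]
  field_simp

theorem Ginc_mul_sq {b : ℝ} (hb : 0 < b) (c : ℝ) :
    Ginc (b * c ^ 2) = 2 * √b * ∫ x in Ioi |c|, exp (-b * x ^ 2) := by
  have hsq : √(b * c ^ 2) = √b * |c| := by rw [sqrt_mul hb.le, sqrt_sq_eq_abs]
  rw [Ginc_eq_two_mul_integral_Ioi_sqrt (by positivity), hsq,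
    ← integral_comp_mul_left_Ioi' (fun x ↦ exp (-x ^ 2)) _ (sqrt_pos.2 hb), smul_eq_mul]
  simp only [mul_pow, sq_sqrt hb.le, neg_mul, mul_assoc]

theorem integral_Ioi_gaussian_eq_sub {b : ℝ} (hb : 0 < b) {c : ℝ} (hc : 0 ≤ c) :
    ∫ x in Ioi c, exp (-b * x ^ 2) = √(π / b) / 2 - ∫ x in 0..c, exp (-b * x ^ 2) := by
  have hint := (integrable_exp_neg_mul_sq hb).integrableOn (s := Ioc 0 c)
  rw [← integral_gaussian_Ioi b, ← Ioc_union_Ioi_eq_Ioi hc, setIntegral_union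
    (Ioc_disjoint_Ioi le_rfl) measurableSet_Ioi hint (integrable_exp_neg_mul_sq hb).integrableOn,
    intervalIntegral.integral_of_le hc]
  ring

theorem Ginc_mul_sq_eq_sub {b : ℝ} (hb : 0 < b) (c : ℝ) :
    Ginc (b * c ^ 2) = √π - 2 * √b * ∫ x in 0..|c|, exp (-b * x ^ 2) := by
  have hπ : √b * √(π / b) = √π := by
    rw [← sqrt_mul hb.le, mul_div_cancel₀ _ hb.ne']
  rw [Ginc_mul_sq hb, integral_Ioi_gaussian_eq_sub hb (abs_nonneg c)]
  linear_combination hπ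

section Primitive

variable {E : Type*} [NormedAddCommGroup E] [NormedSpace ℝ E]

theorem Function.Even.abs_smul_integral_zero_abs {f : ℝ → E} (hf : f.Even) (t : ℝ) :
    |t| • ∫ x in 0..|t|, f x = t • ∫ x in 0..t, f x := by
  rcases le_or_gt 0 t with ht | ht
  · rw [abs_of_nonneg ht]
  · have : ∫ x in 0..-t, f x = -∫ x in 0..t, f x := by
      simpa [hf _, intervalIntegral.integral_symm 0 t] using
        (intervalIntegral.integral_comp_neg (a := t) (b := 0) f).symm
    rw [abs_of_neg ht, this, neg_smul, smul_neg, neg_neg]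

theorem contDiff_primitive [CompleteSpace E] {f : ℝ → E} {n : ℕ} (hf : ContDiff ℝ n f) (a : ℝ) :
    ContDiff ℝ (n + 1) (fun t ↦ ∫ x in a..t, f x) := by
  have hderiv : deriv (fun t ↦ ∫ x in a..t, f x) = f :=
    funext fun t ↦ Continuous.deriv_integral f hf.continuous a t
  rw [contDiff_succ_iff_deriv, hderiv]
  exact ⟨fun t ↦ (hf.continuous.integral_hasStrictDerivAt a t).hasDerivAt.differentiableAt,
    by simp, hf⟩

end Primitive

theorem abs_mul_Ginc_two_pi_mul_sq_sub (t : ℝ) :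
    1 / (2 * √π) * |t| * Ginc (2 * π * t ^ 2) - 1 / 2 * |t| =
      -(√2 * t * ∫ v in 0..t, exp (-(2 * π) * v ^ 2)) := by
  have heven : (fun v ↦ exp (-(2 * π) * v ^ 2)).Even := fun v ↦ by simp only [neg_sq]
  have habs := heven.abs_smul_integral_zero_abs t
  have hπ : √π ≠ 0 := (sqrt_pos.2 pi_pos).ne'
  rw [Ginc_mul_sq_eq_sub two_pi_pos, sqrt_mul zero_le_two]
  generalize (∫ v in 0..|t|, exp (-(2 * π) * v ^ 2)) = I at habs ⊢
  generalize (∫ v in 0..t, exp (-(2 * π) * v ^ 2)) = J at habs ⊢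
  field_simp
  linear_combination -2 * √2 * habs

/-- Paper Lemma 5.5(i): `B(x) - (1/2)|x₃|e^{-π(x₂²-x₃²)}` is `C²` on all of `ℝ²`. -/
theorem stmt2 :
    ContDiff ℝ 2 (fun x : ℝ × ℝ =>
      B x - (1/2) * |x.2| * Real.exp (-(Real.pi * (x.1 ^ 2 - x.2 ^ 2)))) := by
  have hB : (fun x : ℝ × ℝ ↦ B x - 1 / 2 * |x.2| * exp (-(π * (x.1 ^ 2 - x.2 ^ 2)))) =
      fun x ↦ -(1 / (2 * √2 * π)) * exp (-(π * (x.1 ^ 2 + x.2 ^ 2)))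
        - √2 * x.2 * (∫ v in 0..x.2, exp (-(2 * π) * v ^ 2)) * exp (-(π * (x.1 ^ 2 - x.2 ^ 2))) :=
    funext fun x ↦ by
      rw [B]
      linear_combination exp (-(π * (x.1 ^ 2 - x.2 ^ 2))) * abs_mul_Ginc_two_pi_mul_sq_sub x.2
  have hprimitive : ContDiff ℝ 2 fun t ↦ ∫ v in 0..t, exp (-(2 * π) * v ^ 2) :=
    contDiff_primitive (n := 1) (by fun_prop) 0
  rw [hB]
  fun_prop
end

section
/- The function x ↦ A(x) − (1/2)·x₂·sgn(x₃)·e^{−π(x₂²−x₃²)} is continuously differentiable (C¹) on all of ℝ². (Paper Lemma 5.5(ii).) -/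
/-!
Substituting `u = s²` gives `Γ(1/2, t²) = 2 ∫_t^∞ e^{-s²} ds = √π - 2 ∫_0^t e^{-s²} ds` for
`t ≥ 0`, and since the Gaussian is even, `sgn t · Γ(1/2, t²) = √π · sgn t - 2 ∫_0^t e^{-s²} ds`
for every `t`. With `t = √(2π) x₃` the jump term `√π · sgn x₃` is exactly the one subtracted, so
the difference is `-x₂ · (∫_0^{√(2π) x₃} e^{-s²} ds) · e^{-π q(x)} / √π`, a product of `C¹`
functions.
-/

open MeasureTheory

/-- The `e₂`-component `A` of the singular Schwartz function `ψ̃₀,₁`. -/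
noncomputable def A (x : ℝ × ℝ) : ℝ :=
  (1 / (2 * Real.sqrt Real.pi)) * x.1 * Real.sign x.2 * Ginc (2 * Real.pi * x.2 ^ 2) *
    Real.exp (-(Real.pi * (x.1 ^ 2 - x.2 ^ 2)))

open Set Real

theorem Real.sign_mul_of_pos {c : ℝ} (hc : 0 < c) (r : ℝ) :
    Real.sign (c * r) = Real.sign r := by
  rcases lt_trichotomy r 0 with hr | rfl | hr
  · rw [sign_of_neg hr, sign_of_neg (mul_neg_of_pos_of_neg hc hr)]
  · rw [mul_zero]
  · rw [sign_of_pos hr, sign_of_pos (mul_pos hc hr)]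

theorem intervalIntegral.integral_zero_neg_of_even {E : Type*} [NormedAddCommGroup E]
    [NormedSpace ℝ E] {f : ℝ → E} (hf : ∀ x, f (-x) = f x) (t : ℝ) :
    ∫ x in 0..-t, f x = -∫ x in 0..t, f x := by
  have h := integral_comp_neg (a := 0) (b := t) f
  simp only [hf, neg_zero] at h
  rw [h, integral_symm]

theorem contDiff_intervalIntegral {E : Type*} [NormedAddCommGroup E] [NormedSpace ℝ E]
    [CompleteSpace E] {f : ℝ → E} {n : ℕ} (hf : ContDiff ℝ n f) (a : ℝ) :
    ContDiff ℝ (n + 1) (fun t => ∫ s in a..t, f s) := by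
  have hderiv (t : ℝ) : HasDerivAt (fun t => ∫ s in a..t, f s) (f t) t :=
    (hf.continuous.integral_hasStrictDerivAt a t).hasDerivAt
  rw [contDiff_succ_iff_deriv]
  refine ⟨fun t => (hderiv t).differentiableAt, fun h => by simp at h, ?_⟩
  rwa [funext fun t => (hderiv t).deriv]

theorem Ginc_sq {t : ℝ} (ht : 0 ≤ t) : Ginc (t ^ 2) = 2 * ∫ s in Ioi t, exp (-s ^ 2) := by
  have h := integral_comp_rpow_Ioi_of_pos' (g := fun u => exp (-u) * u ^ (-(1:ℝ)/2))
    two_pos (sq_nonneg t)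
  rw [show (t ^ 2) ^ (2 : ℝ)⁻¹ = t by simpa using pow_rpow_inv_natCast ht two_ne_zero] at h
  rw [Ginc, ← h, ← integral_const_mul]
  refine setIntegral_congr_fun measurableSet_Ioi fun s hs => ?_
  have hs : 0 < s := ht.trans_lt hs
  have hrpow : (s ^ (2 : ℝ)) ^ (-(1:ℝ)/2) = s⁻¹ := by
    rw [← rpow_mul hs.le]; norm_num [rpow_neg_one]
  simp only [smul_eq_mul, hrpow]
  norm_num [rpow_two]
  field_simp

theorem integral_Ioi_exp_neg_sq (t : ℝ) :
    ∫ s in Ioi t, exp (-s ^ 2) = √π / 2 - ∫ s in 0..t, exp (-s ^ 2) := by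
  have hint : Integrable (fun s : ℝ => exp (-s ^ 2)) := by
    simpa using integrable_exp_neg_mul_sq one_pos
  have hhalf : ∫ s in Ioi (0 : ℝ), exp (-s ^ 2) = √π / 2 := by
    simpa using integral_gaussian_Ioi 1
  rw [← hhalf, ← intervalIntegral.integral_interval_add_Ioi (a := 0) (b := t)
    hint.integrableOn hint.integrableOn]
  ring

theorem sign_mul_Ginc_sq (t : ℝ) :
    sign t * Ginc (t ^ 2) = √π * sign t - 2 * ∫ s in 0..t, exp (-s ^ 2) := by
  rcases lt_trichotomy t 0 with ht | rfl | ht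
  · have hodd := intervalIntegral.integral_zero_neg_of_even (f := fun s => exp (-s ^ 2))
      (fun s => by rw [neg_sq]) t
    rw [← neg_sq, Ginc_sq (neg_nonneg.mpr ht.le), integral_Ioi_exp_neg_sq, hodd, sign_of_neg ht]
    ring
  · simp
  · rw [Ginc_sq ht.le, integral_Ioi_exp_neg_sq, sign_of_pos ht]
    ring

theorem A_sub_eq_neg_integral (x : ℝ × ℝ) :
    A x - (1/2) * x.1 * Real.sign x.2 * Real.exp (-(Real.pi * (x.1 ^ 2 - x.2 ^ 2))) =
      -(x.1 * (∫ s in 0..√(2 * π) * x.2, exp (-s ^ 2)) * exp (-(π * (x.1 ^ 2 - x.2 ^ 2)))) /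
        √π := by
  have h2π : 0 < √(2 * π) := by positivity
  have key := sign_mul_Ginc_sq (√(2 * π) * x.2)
  rw [sign_mul_of_pos h2π, mul_pow, sq_sqrt (by positivity)] at key
  calc _ = x.1 * (sign x.2 * Ginc (2 * π * x.2 ^ 2)) * exp (-(π * (x.1 ^ 2 - x.2 ^ 2))) /
          (2 * √π) - (1/2) * x.1 * sign x.2 * exp (-(π * (x.1 ^ 2 - x.2 ^ 2))) := by
        rw [A]; ring
    _ = _ := by rw [key]; field_simp; ring

/-- Paper Lemma 5.5(ii): `A(x) - (1/2)x₂·sgn(x₃)·e^{-π(x₂²-x₃²)}` is `C¹` on all of `ℝ²`. -/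
theorem stmt3 :
    ContDiff ℝ 1 (fun x : ℝ × ℝ =>
      A x - (1/2) * x.1 * Real.sign x.2 * Real.exp (-(Real.pi * (x.1 ^ 2 - x.2 ^ 2)))) := by
  simp only [A_sub_eq_neg_integral]
  have hprimitive : ContDiff ℝ 1 (fun t : ℝ => ∫ s in 0..t, exp (-s ^ 2)) :=
    contDiff_intervalIntegral (n := 0) (by fun_prop) 0
  have hscaled := hprimitive.comp (contDiff_const.mul contDiff_snd :
    ContDiff ℝ 1 fun x : ℝ × ℝ => √(2 * π) * x.2)
  fun_prop
end

section
/- The functions A and B are bounded on ℝ², B is continuous on ℝ², and both A and B are integrable and square-integrable on ℝ², i.e. A, B ∈ L¹(ℝ²) ∩ L²(ℝ²). -/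
/-!
Substituting `u = v + a` gives `Γ(s, a) ≤ Γ(s) e^{-a}` for `a ≥ 0` and `s ≤ 1`, so the singular
factor `Γ(1/2, 2πx₃²) e^{πx₃²}` is at most `√π e^{-πx₃²}`. Hence `|A|` and `|B|` are dominated by
Gaussians times `|x₂|` or `|x₃|`, which are bounded and integrable on `ℝ²`, and a bounded integrable
function is square-integrable. Continuity of `B` comes from that of `a ↦ Γ(1/2, a)` on `[0, ∞)`.
-/

open MeasureTheory

open Real Set

noncomputable def upperIncGamma (s a : ℝ) : ℝ := ∫ u in Ioi a, exp (-u) * u ^ (s - 1)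

lemma upperIncGamma_nonneg (s : ℝ) {a : ℝ} (ha : 0 ≤ a) : 0 ≤ upperIncGamma s a :=
  setIntegral_nonneg measurableSet_Ioi fun _ hu =>
    mul_nonneg (exp_nonneg _) (rpow_nonneg (ha.trans (le_of_lt hu)) _)

lemma continuousOn_upperIncGamma {s : ℝ} (hs : 0 < s) : ContinuousOn (upperIncGamma s) (Ici 0) :=
  (GammaIntegral_convergent hs).continuousOn_Ici_primitive_Ioi

lemma upperIncGamma_le_Gamma_mul_exp {s a : ℝ} (hs : 0 < s) (hs₁ : s ≤ 1) (ha : 0 ≤ a) :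
    upperIncGamma s a ≤ Gamma s * exp (-a) := by
  have hshift : upperIncGamma s a = ∫ v in Ioi 0, exp (-(v + a)) * (v + a) ^ (s - 1) := by
    rw [upperIncGamma, ← (measurePreserving_add_right volume a).setIntegral_preimage_emb
      (measurableEmbedding_addRight a), preimage_add_const_Ioi, sub_self]
  calc upperIncGamma s a
      ≤ ∫ v in Ioi 0, exp (-a) * (exp (-v) * v ^ (s - 1)) := by
        rw [hshift]
        refine integral_mono_of_nonneg ?_ ((GammaIntegral_convergent hs).const_mul _) ?_
        · filter_upwards [ae_restrict_mem measurableSet_Ioi] with v hv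
          exact mul_nonneg (exp_nonneg _) (rpow_nonneg (by linarith [mem_Ioi.mp hv]) _)
        · filter_upwards [ae_restrict_mem measurableSet_Ioi] with v hv
          have hpow : (v + a) ^ (s - 1) ≤ v ^ (s - 1) :=
            rpow_le_rpow_of_nonpos hv (by linarith) (by linarith)
          calc exp (-(v + a)) * (v + a) ^ (s - 1)
              = exp (-a) * (exp (-v) * (v + a) ^ (s - 1)) := by rw [neg_add, exp_add]; ring
            _ ≤ exp (-a) * (exp (-v) * v ^ (s - 1)) := by gcongr
    _ = Gamma s * exp (-a) := by rw [integral_const_mul, Gamma_eq_integral hs, mul_comm]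

lemma Ginc_eq_upperIncGamma : Ginc = upperIncGamma (1 / 2) := by
  funext a
  norm_num [Ginc, upperIncGamma]

lemma Ginc_nonneg {a : ℝ} (ha : 0 ≤ a) : 0 ≤ Ginc a := by
  rw [Ginc_eq_upperIncGamma]
  exact upperIncGamma_nonneg _ ha

lemma Ginc_two_pi_mul_sq_mul_exp_le (t : ℝ) :
    Ginc (2 * π * t ^ 2) * exp (π * t ^ 2) ≤ √π * exp (-π * t ^ 2) := by
  have hG : Ginc (2 * π * t ^ 2) ≤ √π * exp (-(2 * π * t ^ 2)) := by
    rw [Ginc_eq_upperIncGamma, ← Gamma_one_half_eq]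
    exact upperIncGamma_le_Gamma_mul_exp (by norm_num) (by norm_num) (by positivity)
  calc Ginc (2 * π * t ^ 2) * exp (π * t ^ 2)
      ≤ √π * exp (-(2 * π * t ^ 2)) * exp (π * t ^ 2) := by gcongr
    _ = √π * exp (-π * t ^ 2) := by rw [mul_assoc, ← exp_add]; ring_nf

lemma continuous_Ginc_two_pi_mul_sq : Continuous fun t : ℝ => Ginc (2 * π * t ^ 2) := by
  rw [Ginc_eq_upperIncGamma]
  exact (continuousOn_upperIncGamma (by norm_num)).comp_continuous (by fun_prop)
    fun t => mem_Ici.mpr (by positivity)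

lemma exp_neg_pi_mul_sq_le_one (t : ℝ) : exp (-π * t ^ 2) ≤ 1 :=
  exp_le_one_iff.mpr (by nlinarith [pi_pos, sq_nonneg t])

lemma abs_mul_exp_neg_pi_mul_sq_le_one (t : ℝ) : |t| * exp (-π * t ^ 2) ≤ 1 := by
  -- `|t| ≤ π t² + 1` because `π t² - |t| + 1` has negative discriminant
  have hlin : |t| ≤ π * t ^ 2 + 1 := by
    nlinarith [pi_gt_three, sq_abs t, sq_nonneg (2 * |t| - 1)]
  calc |t| * exp (-π * t ^ 2) ≤ exp (π * t ^ 2) * exp (-π * t ^ 2) := by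
        gcongr
        exact hlin.trans (add_one_le_exp _)
    _ = 1 := by rw [← exp_add]; ring_nf; exact exp_zero

lemma integrable_exp_neg_pi_mul_sq : Integrable fun t : ℝ => exp (-π * t ^ 2) :=
  integrable_exp_neg_mul_sq pi_pos

lemma integrable_abs_mul_exp_neg_pi_mul_sq : Integrable fun t : ℝ => |t| * exp (-π * t ^ 2) := by
  simpa only [abs_mul, abs_of_pos (exp_pos _)] using (integrable_mul_exp_neg_mul_sq pi_pos).abs

lemma memLp_two_of_integrable_of_abs_le {α : Type*} [MeasurableSpace α] {μ : Measure α}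
    {f : α → ℝ} {C : ℝ} (hf : Integrable f μ) (hC : ∀ x, |f x| ≤ C) : MemLp f 2 μ := by
  rw [memLp_two_iff_integrable_sq hf.aestronglyMeasurable]
  simpa only [sq] using hf.bdd_mul hf.aestronglyMeasurable (ae_of_all _ hC)

lemma Real.measurable_sign : Measurable Real.sign :=
  Measurable.ite measurableSet_Iio measurable_const
    (Measurable.ite measurableSet_Ioi measurable_const measurable_const)

lemma abs_A_le (x : ℝ × ℝ) :
    |A x| ≤ 1 / 2 * (|x.1| * exp (-π * x.1 ^ 2)) * exp (-π * x.2 ^ 2) := by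
  have hsign : |Real.sign x.2| ≤ 1 := by
    rcases Real.sign_apply_eq x.2 with h | h | h <;> norm_num [h]
  have hA : |A x| = 1 / (2 * √π) * (|x.1| * exp (-π * x.1 ^ 2)) * |Real.sign x.2| *
      (Ginc (2 * π * x.2 ^ 2) * exp (π * x.2 ^ 2)) := by
    rw [A, abs_mul, abs_mul, abs_mul, abs_mul, abs_of_nonneg (Ginc_nonneg (by positivity)),
      abs_of_pos (exp_pos _), abs_of_pos (by positivity : 0 < 1 / (2 * √π)),
      show -(π * (x.1 ^ 2 - x.2 ^ 2)) = -π * x.1 ^ 2 + π * x.2 ^ 2 by ring, exp_add]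
    ring
  have hG := Ginc_nonneg (a := 2 * π * x.2 ^ 2) (by positivity)
  calc |A x| ≤ 1 / (2 * √π) * (|x.1| * exp (-π * x.1 ^ 2)) * 1 *
        (√π * exp (-π * x.2 ^ 2)) := by
        rw [hA]
        gcongr _ * ?_ * ?_
        exact Ginc_two_pi_mul_sq_mul_exp_le x.2
    _ = 1 / 2 * (|x.1| * exp (-π * x.1 ^ 2)) * exp (-π * x.2 ^ 2) := by field_simp

lemma abs_B_le (x : ℝ × ℝ) :
    |B x| ≤ 1 / (2 * √2 * π) * exp (-π * x.1 ^ 2) * exp (-π * x.2 ^ 2) +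
      1 / 2 * exp (-π * x.1 ^ 2) * (|x.2| * exp (-π * x.2 ^ 2)) := by
  have hG := Ginc_nonneg (a := 2 * π * x.2 ^ 2) (by positivity)
  have hgauss : |-(1 / (2 * √2 * π)) * exp (-(π * (x.1 ^ 2 + x.2 ^ 2)))| =
      1 / (2 * √2 * π) * exp (-π * x.1 ^ 2) * exp (-π * x.2 ^ 2) := by
    rw [abs_mul, abs_neg, abs_of_pos (by positivity : 0 < 1 / (2 * √2 * π)),
      abs_of_pos (exp_pos _),
      show -(π * (x.1 ^ 2 + x.2 ^ 2)) = -π * x.1 ^ 2 + -π * x.2 ^ 2 by ring, exp_add]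
    ring
  have hsingular : |1 / (2 * √π) * |x.2| * Ginc (2 * π * x.2 ^ 2) *
      exp (-(π * (x.1 ^ 2 - x.2 ^ 2)))| ≤
      1 / 2 * exp (-π * x.1 ^ 2) * (|x.2| * exp (-π * x.2 ^ 2)) := by
    rw [abs_of_nonneg (by positivity),
      show -(π * (x.1 ^ 2 - x.2 ^ 2)) = -π * x.1 ^ 2 + π * x.2 ^ 2 by ring, exp_add]
    calc 1 / (2 * √π) * |x.2| * Ginc (2 * π * x.2 ^ 2) * (exp (-π * x.1 ^ 2) * exp (π * x.2 ^ 2))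
        = 1 / (2 * √π) * exp (-π * x.1 ^ 2) * |x.2| *
          (Ginc (2 * π * x.2 ^ 2) * exp (π * x.2 ^ 2)) := by ring
      _ ≤ 1 / (2 * √π) * exp (-π * x.1 ^ 2) * |x.2| * (√π * exp (-π * x.2 ^ 2)) := by
        gcongr _ * ?_
        exact Ginc_two_pi_mul_sq_mul_exp_le x.2
      _ = 1 / 2 * exp (-π * x.1 ^ 2) * (|x.2| * exp (-π * x.2 ^ 2)) := by field_simp
  calc |B x| ≤ _ := abs_add_le _ _
    _ ≤ _ := by rw [hgauss]; gcongr

lemma abs_A_le_half (x : ℝ × ℝ) : |A x| ≤ 1 / 2 := by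
  have h₁ := abs_mul_exp_neg_pi_mul_sq_le_one x.1
  have h₂ := exp_neg_pi_mul_sq_le_one x.2
  calc |A x| ≤ _ := abs_A_le x
    _ ≤ 1 / 2 * 1 * 1 := by gcongr
    _ = 1 / 2 := by norm_num

lemma abs_B_le_const (x : ℝ × ℝ) : |B x| ≤ 1 / (2 * √2 * π) + 1 / 2 := by
  have h₁ := exp_neg_pi_mul_sq_le_one x.1
  have h₂ := exp_neg_pi_mul_sq_le_one x.2
  have h₃ := abs_mul_exp_neg_pi_mul_sq_le_one x.2
  calc |B x| ≤ _ := abs_B_le x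
    _ ≤ 1 / (2 * √2 * π) * 1 * 1 + 1 / 2 * 1 * 1 := by gcongr
    _ = _ := by ring

lemma measurable_A : Measurable A := by
  have : Measurable fun x : ℝ × ℝ => Ginc (2 * π * x.2 ^ 2) :=
    (continuous_Ginc_two_pi_mul_sq.comp continuous_snd).measurable
  have : Measurable fun x : ℝ × ℝ => Real.sign x.2 := Real.measurable_sign.comp measurable_snd
  unfold A
  fun_prop

lemma continuous_B : Continuous B := by
  have : Continuous fun x : ℝ × ℝ => Ginc (2 * π * x.2 ^ 2) :=
    continuous_Ginc_two_pi_mul_sq.comp continuous_snd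
  unfold B
  fun_prop

lemma integrable_A : Integrable A := by
  refine Integrable.mono' ?_ measurable_A.aestronglyMeasurable (ae_of_all _ abs_A_le)
  rw [Measure.volume_eq_prod]
  exact (integrable_abs_mul_exp_neg_pi_mul_sq.const_mul _).mul_prod integrable_exp_neg_pi_mul_sq

lemma integrable_B : Integrable B := by
  refine Integrable.mono' ?_ continuous_B.aestronglyMeasurable (ae_of_all _ abs_B_le)
  rw [Measure.volume_eq_prod]
  exact ((integrable_exp_neg_pi_mul_sq.const_mul _).mul_prod integrable_exp_neg_pi_mul_sq).add
    ((integrable_exp_neg_pi_mul_sq.const_mul _).mul_prod integrable_abs_mul_exp_neg_pi_mul_sq)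

/-- `A` and `B` are bounded on `ℝ²`, `B` is continuous, and both `A` and `B` are
integrable and square-integrable on `ℝ²`. -/
theorem stmt5 :
    (∃ C : ℝ, ∀ x : ℝ × ℝ, |A x| ≤ C) ∧
    (∃ C : ℝ, ∀ x : ℝ × ℝ, |B x| ≤ C) ∧
    Continuous B ∧
    Integrable A (volume : Measure (ℝ × ℝ)) ∧
    Integrable B (volume : Measure (ℝ × ℝ)) ∧
    MemLp A 2 (volume : Measure (ℝ × ℝ)) ∧
    MemLp B 2 (volume : Measure (ℝ × ℝ)) :=
  ⟨⟨_, abs_A_le_half⟩, ⟨_, abs_B_le_const⟩, continuous_B, integrable_A, integrable_B,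
    memLp_two_of_integrable_of_abs_le integrable_A abs_A_le_half,
    memLp_two_of_integrable_of_abs_le integrable_B abs_B_le_const⟩
end

section
/- For every x=(x₂,x₃)∈ℝ² with x₃ ≠ 0 one has (DB)(x) = A(x) and B(x) − (DA)(x) = 2^{−3/2}·(4x₂² − 1/π)·e^{−π(x₂²+x₃²)}. (These are the two scalar components of the identity d ψ̃₀,₁(x) = φ₁,₁(x) of paper Lemma 5.12, where 2^{−3/2}·(4x₂²−1/π)·e^{−π(x₂²+x₃²)} is the coefficient of the Kudla–Millson form φ₁,₁.) -/
/-! Since `Γ(1/2, ·)` has derivative `-e^{-a} a^{-1/2}` on `(0, ∞)`, the chain rule gives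
`d/dt Γ(1/2, 2πt²) = -2√(2π) sgn(t) e^{-2πt²}` for `t ≠ 0`. As `sgn` is locally constant and
`d|t|/dt = sgn t` away from `0`, all four partial derivatives of `A` and `B` are explicit, and both
identities reduce to algebra with `sgn(x₃) x₃ = |x₃|`, `sgn(x₃)² = 1` and
`e^{-2πx₃²} e^{-π q(x)} = e^{-π(x₂² + x₃²)}`. -/

open MeasureTheory

open Set Filter Topology

theorem hasDerivAt_setIntegral_Ioi {E : Type*} [NormedAddCommGroup E] [NormedSpace ℝ E]
    [CompleteSpace E] {f : ℝ → E} {a b : ℝ} (hba : b < a) (hf : IntegrableOn f (Ioi b))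
    (hfa : ContinuousAt f a) :
    HasDerivAt (fun t => ∫ u in Ioi t, f u) (-f a) a := by
  have hmeas : StronglyMeasurableAtFilter f (𝓝 a) :=
    AEStronglyMeasurable.stronglyMeasurableAtFilter_of_mem hf.aestronglyMeasurable
      (Ioi_mem_nhds hba)
  have hint : IntervalIntegrable f volume b a :=
    (intervalIntegrable_iff_integrableOn_Ioc_of_le hba.le).2 (hf.mono_set Ioc_subset_Ioi_self)
  refine ((intervalIntegral.integral_hasDerivAt_right hint hmeas hfa).const_sub
    (∫ u in Ioi b, f u)).congr_of_eventuallyEq ?_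
  filter_upwards [Ioi_mem_nhds hba] with t ht
  rw [← intervalIntegral.integral_Ioi_sub_Ioi hf ht.le, sub_sub_cancel]

theorem hasDerivAt_Ginc {a : ℝ} (ha : 0 < a) :
    HasDerivAt Ginc (-(Real.exp (-a) * a ^ (-(1:ℝ)/2))) a := by
  have hf : IntegrableOn (fun u : ℝ => Real.exp (-u) * u ^ (-(1:ℝ)/2)) (Ioi 0) := by
    convert Real.GammaIntegral_convergent one_half_pos using 4; norm_num
  exact hasDerivAt_setIntegral_Ioi ha hf <|
    (Real.continuous_exp.comp continuous_neg).continuousAt.mul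
      (Real.continuousAt_rpow_const a _ (Or.inl ha.ne'))

namespace Real

theorem sign_mul_self_eq_abs (r : ℝ) : sign r * r = |r| := by
  rcases lt_trichotomy r 0 with h | rfl | h
  · rw [sign_of_neg h, abs_of_neg h]; ring
  · simp
  · rw [sign_of_pos h, abs_of_pos h]; ring

theorem sign_mul_sign_of_ne_zero {r : ℝ} (hr : r ≠ 0) : sign r * sign r = 1 := by
  rcases sign_apply_eq_of_ne_zero r hr with h | h <;> rw [h] <;> norm_num

theorem sign_eventuallyEq {x : ℝ} (hx : x ≠ 0) : sign =ᶠ[𝓝 x] fun _ => sign x := by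
  rcases hx.lt_or_gt with h | h
  · filter_upwards [Iio_mem_nhds h] with t ht using by rw [sign_of_neg ht, sign_of_neg h]
  · filter_upwards [Ioi_mem_nhds h] with t ht using by rw [sign_of_pos ht, sign_of_pos h]

theorem hasDerivAt_abs_sign {x : ℝ} (hx : x ≠ 0) : HasDerivAt (|·|) (sign x) x := by
  refine ((hasDerivAt_id x).const_mul (sign x)).congr_of_eventuallyEq ?_
    |>.congr_deriv (mul_one _)
  filter_upwards [sign_eventuallyEq hx] with t ht
  rw [← sign_mul_self_eq_abs, ht, id]

theorem two_rpow_neg_three_div_two : (2:ℝ) ^ (-(3:ℝ)/2) = (2 * √2)⁻¹ := by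
  rw [show (-(3:ℝ)/2) = -(1 + 1/2) by norm_num, rpow_neg zero_le_two,
    rpow_add two_pos, rpow_one, ← sqrt_eq_rpow]

end Real

open Real

theorem hasDerivAt_Ginc_two_pi_mul_sq {x : ℝ} (hx : x ≠ 0) :
    HasDerivAt (fun t => Ginc (2 * π * t ^ 2))
      (-(2 * √2 * √π * sign x * exp (-(2 * π * x ^ 2)))) x := by
  have ha : 0 < 2 * π * x ^ 2 := by positivity
  have hsq : HasDerivAt (fun t => 2 * π * t ^ 2) (2 * π * (2 * x)) x := by
    simpa using (hasDerivAt_pow 2 x).const_mul (2 * π)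
  refine ((hasDerivAt_Ginc ha).comp x hsq).congr_deriv ?_
  have hrpow : (2 * π * x ^ 2) ^ (-(1:ℝ)/2) = (√2 * √π * |x|)⁻¹ := by
    rw [show (-(1:ℝ)/2) = -(1/2) by norm_num, rpow_neg ha.le, ← sqrt_eq_rpow,
      sqrt_mul (by positivity), sqrt_mul zero_le_two, sqrt_sq_eq_abs]
  have h2 : √2 * √2 = 2 := mul_self_sqrt zero_le_two
  have hπ : √π * √π = π := mul_self_sqrt pi_pos.le
  rw [hrpow, ← sign_mul_self_eq_abs]
  have hs := sign_mul_sign_of_ne_zero hx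
  have hs0 : sign x ≠ 0 := by rwa [Ne, sign_eq_zero_iff]
  field_simp
  linear_combination (√π ^ 2 * sign x ^ 2) * h2 + 2 * sign x ^ 2 * hπ + 2 * π * hs

theorem exp_neg_two_pi_sq_mul_exp (a c : ℝ) :
    exp (-(2 * π * c ^ 2)) * exp (-(π * (a ^ 2 - c ^ 2))) = exp (-(π * (a ^ 2 + c ^ 2))) := by
  rw [← exp_add]; ring_nf

theorem hasDerivAt_B_fst (x₂ x₃ : ℝ) :
    HasDerivAt (fun t => B (t, x₃))
      (x₂ / √2 * exp (-(π * (x₂ ^ 2 + x₃ ^ 2)))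
        - √π * x₂ * |x₃| * Ginc (2 * π * x₃ ^ 2) * exp (-(π * (x₂ ^ 2 - x₃ ^ 2)))) x₂ := by
  have hp : HasDerivAt (fun t => -(π * (t ^ 2 + x₃ ^ 2))) (-(π * (2 * x₂))) x₂ :=
    (((hasDerivAt_pow 2 x₂).add_const (x₃ ^ 2)).const_mul π).fun_neg.congr_deriv
      (by push_cast; ring)
  have hm : HasDerivAt (fun t => -(π * (t ^ 2 - x₃ ^ 2))) (-(π * (2 * x₂))) x₂ :=
    (((hasDerivAt_pow 2 x₂).sub_const (x₃ ^ 2)).const_mul π).fun_neg.congr_deriv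
      (by push_cast; ring)
  simp only [B]
  refine ((hp.exp.const_mul _).fun_add (hm.exp.const_mul _)).congr_deriv ?_
  have hπ : √π * √π = π := mul_self_sqrt pi_pos.le
  field_simp
  linear_combination x₂ * √2 * |x₃| * Ginc (2 * π * x₃ ^ 2) * exp (-(π * (x₂ ^ 2 - x₃ ^ 2))) * hπ

theorem hasDerivAt_B_snd (x₂ : ℝ) {x₃ : ℝ} (hx : x₃ ≠ 0) :
    HasDerivAt (fun t => B (x₂, t))
      (-(x₃ / √2 * exp (-(π * (x₂ ^ 2 + x₃ ^ 2))))
        + (sign x₃ / (2 * √π) + √π * x₃ * |x₃|) * Ginc (2 * π * x₃ ^ 2)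
          * exp (-(π * (x₂ ^ 2 - x₃ ^ 2)))) x₃ := by
  have hp : HasDerivAt (fun t => -(π * (x₂ ^ 2 + t ^ 2))) (-(π * (2 * x₃))) x₃ :=
    (((hasDerivAt_pow 2 x₃).const_add (x₂ ^ 2)).const_mul π).fun_neg.congr_deriv
      (by push_cast; ring)
  have hm : HasDerivAt (fun t => -(π * (x₂ ^ 2 - t ^ 2))) (π * (2 * x₃)) x₃ :=
    (((hasDerivAt_pow 2 x₃).const_sub (x₂ ^ 2)).const_mul π).fun_neg.congr_deriv
      (by push_cast; ring)
  refine ((hp.exp.const_mul _).fun_add ((((hasDerivAt_abs_sign hx).const_mul _).fun_mul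
    (hasDerivAt_Ginc_two_pi_mul_sq hx)).fun_mul hm.exp)).congr_deriv ?_
  have h2 : √2 * √2 = 2 := mul_self_sqrt zero_le_two
  have hπ : √π * √π = π := mul_self_sqrt pi_pos.le
  have hs := sign_mul_sign_of_ne_zero hx
  have habs := sign_mul_self_eq_abs x₃
  have hE := exp_neg_two_pi_sq_mul_exp x₂ x₃
  set G := Ginc (2 * π * x₃ ^ 2)
  set e := exp (-(2 * π * x₃ ^ 2))
  set Em := exp (-(π * (x₂ ^ 2 - x₃ ^ 2)))
  field_simp
  linear_combination (-2 * √π * sign x₃ * |x₃| * e * Em) * h2 + 4 * √π * sign x₃ * e * Em * habs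
    - 4 * √π * x₃ * e * Em * hs - 4 * √π * x₃ * hE - 2 * √2 * x₃ * G * |x₃| * Em * hπ

theorem hasDerivAt_A_fst (x₂ x₃ : ℝ) :
    HasDerivAt (fun t => A (t, x₃))
      ((1 / (2 * √π) - √π * x₂ ^ 2) * sign x₃ * Ginc (2 * π * x₃ ^ 2)
        * exp (-(π * (x₂ ^ 2 - x₃ ^ 2)))) x₂ := by
  have hm : HasDerivAt (fun t => -(π * (t ^ 2 - x₃ ^ 2))) (-(π * (2 * x₂))) x₂ :=
    (((hasDerivAt_pow 2 x₂).sub_const (x₃ ^ 2)).const_mul π).fun_neg.congr_deriv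
      (by push_cast; ring)
  simp only [A]
  refine (((((hasDerivAt_id' x₂).const_mul _).mul_const _).mul_const _).fun_mul hm.exp).congr_deriv
    ?_
  have hπ : √π * √π = π := mul_self_sqrt pi_pos.le
  field_simp
  linear_combination 2 * sign x₃ * Ginc (2 * π * x₃ ^ 2) * x₂ ^ 2 * hπ

theorem hasDerivAt_A_snd (x₂ : ℝ) {x₃ : ℝ} (hx : x₃ ≠ 0) :
    HasDerivAt (fun t => A (x₂, t))
      (-(√2 * x₂ * exp (-(π * (x₂ ^ 2 + x₃ ^ 2))))
        + √π * x₂ * x₃ * sign x₃ * Ginc (2 * π * x₃ ^ 2) * exp (-(π * (x₂ ^ 2 - x₃ ^ 2)))) x₃ := by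
  have hm : HasDerivAt (fun t => -(π * (x₂ ^ 2 - t ^ 2))) (π * (2 * x₃)) x₃ :=
    (((hasDerivAt_pow 2 x₃).const_sub (x₂ ^ 2)).const_mul π).fun_neg.congr_deriv
      (by push_cast; ring)
  have hsign : (fun t => A (x₂, t)) =ᶠ[𝓝 x₃] fun t => 1 / (2 * √π) * x₂ * sign x₃ *
      Ginc (2 * π * t ^ 2) * exp (-(π * (x₂ ^ 2 - t ^ 2))) := by
    filter_upwards [sign_eventuallyEq hx] with t ht
    rw [A, ht]
  refine ((((hasDerivAt_Ginc_two_pi_mul_sq hx).const_mul _).fun_mul hm.exp).congr_of_eventuallyEq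
    hsign).congr_deriv ?_
  have hπ : √π * √π = π := mul_self_sqrt pi_pos.le
  have hs := sign_mul_sign_of_ne_zero hx
  have hE := exp_neg_two_pi_sq_mul_exp x₂ x₃
  set G := Ginc (2 * π * x₃ ^ 2)
  set e := exp (-(2 * π * x₃ ^ 2))
  set Em := exp (-(π * (x₂ ^ 2 - x₃ ^ 2)))
  field_simp
  linear_combination (-x₂ * √π * √2 * e * Em) * hs - x₂ * √π * √2 * hE
    - x₂ * sign x₃ * x₃ * Em * G * hπ

/-- Paper Lemma 5.12, scalar components of `dψ̃₀,₁ = φ₁,₁`: for `x₃ ≠ 0`,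
`(DB)(x) = A(x)` and `B(x) - (DA)(x) = 2^{-3/2}(4x₂² - 1/π)e^{-π(x₂²+x₃²)}`,
where `(Dg)(x) = x₃·∂g/∂x₂(x) + x₂·∂g/∂x₃(x)`. -/
theorem stmt6 (x₂ x₃ : ℝ) (hx : x₃ ≠ 0) :
    (∃ d₂ d₃ : ℝ,
      HasDerivAt (fun t : ℝ => B (t, x₃)) d₂ x₂ ∧
      HasDerivAt (fun t : ℝ => B (x₂, t)) d₃ x₃ ∧
      x₃ * d₂ + x₂ * d₃ = A (x₂, x₃)) ∧
    (∃ d₂ d₃ : ℝ,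
      HasDerivAt (fun t : ℝ => A (t, x₃)) d₂ x₂ ∧
      HasDerivAt (fun t : ℝ => A (x₂, t)) d₃ x₃ ∧
      B (x₂, x₃) - (x₃ * d₂ + x₂ * d₃)
        = (2:ℝ) ^ (-(3:ℝ)/2) * (4 * x₂ ^ 2 - 1 / Real.pi) *
            Real.exp (-(Real.pi * (x₂ ^ 2 + x₃ ^ 2)))) := by
  refine ⟨⟨_, _, hasDerivAt_B_fst x₂ x₃, hasDerivAt_B_snd x₂ hx, ?_⟩,
    ⟨_, _, hasDerivAt_A_fst x₂ x₃, hasDerivAt_A_snd x₂ hx, ?_⟩⟩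
  · rw [A]; ring
  · have h2 : √2 * √2 = 2 := mul_self_sqrt zero_le_two
    have habs := sign_mul_self_eq_abs x₃
    rw [B, two_rpow_neg_three_div_two]
    field_simp
    linear_combination (-√2 * π * Ginc (2 * π * x₃ ^ 2) * exp (-(π * (x₂ ^ 2 - x₃ ^ 2)))) * habs
      + 2 * π * x₂ ^ 2 * √π * exp (-(π * (x₂ ^ 2 + x₃ ^ 2))) * h2
end

section
/- The function B+B' is twice continuously differentiable (C²) on the open set {x∈ℝ² : x₂² ≠ x₃²}, and the function A+A' is continuously differentiable (C¹) on {x∈ℝ² : x₂² ≠ x₃²}. (Paper Proposition 5.10(i),(ii).) -/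
open MeasureTheory
open scoped ContDiff

noncomputable def E0 (r : ℝ) : ℝ := ∫ s in (0:ℝ)..r, Real.exp (-s^2)

lemma gauss_cont : Continuous fun s : ℝ => Real.exp (-s^2) := by fun_prop

lemma gauss_integrable : Integrable fun s : ℝ => Real.exp (-s^2) := by
  simpa using integrable_exp_neg_mul_sq one_pos

lemma E0_hasDerivAt (r : ℝ) : HasDerivAt E0 (Real.exp (-r^2)) r :=
  (gauss_cont.integral_hasStrictDerivAt 0 r).hasDerivAt

lemma contDiff_E0 : ContDiff ℝ ∞ E0 := by
  rw [contDiff_infty_iff_deriv]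
  refine ⟨fun r => (E0_hasDerivAt r).differentiableAt, ?_⟩
  have h : deriv E0 = fun r => Real.exp (-r^2) := funext fun r => (E0_hasDerivAt r).deriv
  rw [h]
  exact ((contDiff_id.pow 2).neg).exp

lemma E0_zero : E0 0 = 0 := by simp [E0]

lemma E0_neg (r : ℝ) : E0 (-r) = - E0 r := by
  have h := intervalIntegral.integral_comp_neg (a := (0:ℝ)) (b := r)
    (fun s : ℝ => Real.exp (-s^2))
  simp only [neg_sq, neg_zero] at h
  unfold E0
  rw [intervalIntegral.integral_symm, ← h]

lemma gauss_Ioi (r : ℝ) (hr : 0 ≤ r) :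
    ∫ s in Set.Ioi r, Real.exp (-s^2) = Real.sqrt Real.pi / 2 - E0 r := by
  have hsplit : ∫ s in Set.Ioi (0:ℝ), Real.exp (-s^2)
      = (∫ s in Set.Ioc 0 r, Real.exp (-s^2)) + ∫ s in Set.Ioi r, Real.exp (-s^2) := by
    rw [← Set.Ioc_union_Ioi_eq_Ioi hr]
    exact setIntegral_union Set.Ioc_disjoint_Ioi_same measurableSet_Ioi
      gauss_integrable.integrableOn gauss_integrable.integrableOn
  have hg : ∫ s in Set.Ioi (0:ℝ), Real.exp (-s^2) = Real.sqrt Real.pi / 2 := by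
    have := integral_gaussian_Ioi 1
    simpa using this
  have hE : E0 r = ∫ s in Set.Ioc 0 r, Real.exp (-s^2) :=
    intervalIntegral.integral_of_le hr
  rw [hE]
  linarith [hsplit, hg]

lemma Ginc_sq_s8 {r : ℝ} (hr : 0 < r) : Ginc (r^2) = Real.sqrt Real.pi - 2 * E0 r := by
  have himg : (fun s : ℝ => s^2) '' Set.Ioi r = Set.Ioi (r^2) := by
    ext y
    simp only [Set.mem_image, Set.mem_Ioi]
    constructor
    · rintro ⟨s, hs, rfl⟩
      exact pow_lt_pow_left₀ hs hr.le two_ne_zero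
    · intro hy
      have hy0 : 0 < y := lt_trans (by positivity) hy
      exact ⟨Real.sqrt y, (Real.lt_sqrt hr.le).2 hy, Real.sq_sqrt hy0.le⟩
  have hderiv : ∀ s ∈ Set.Ioi r, HasDerivWithinAt (fun s : ℝ => s^2) (2*s) (Set.Ioi r) s := by
    intro s _
    simpa using (hasDerivAt_pow 2 s).hasDerivWithinAt
  have hinj : Set.InjOn (fun s : ℝ => s^2) (Set.Ioi r) := by
    intro a ha b hb hab
    simp only [Set.mem_Ioi] at ha hb
    have h1 : (a-b)*(a+b) = 0 := by dsimp only at hab; linear_combination hab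
    rcases mul_eq_zero.1 h1 with h|h
    · linarith
    · linarith
  have hcv := integral_image_eq_integral_abs_deriv_smul (f' := fun s : ℝ => 2*s)
    measurableSet_Ioi hderiv hinj (fun u : ℝ => Real.exp (-u) * u ^ (-(1:ℝ)/2))
  unfold Ginc
  rw [← himg, hcv]
  have hpt : Set.EqOn (fun s : ℝ => |2*s| • (Real.exp (-(s^2)) * (s^2:ℝ) ^ (-(1:ℝ)/2)))
      (fun s : ℝ => 2 * Real.exp (-s^2)) (Set.Ioi r) := by
    intro s hs
    simp only [Set.mem_Ioi] at hs
    have hs0 : 0 < s := lt_trans hr hs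
    have hrp : ((s^2:ℝ)) ^ (-(1:ℝ)/2) = s⁻¹ := by
      rw [← Real.rpow_natCast s 2, ← Real.rpow_mul hs0.le]
      norm_num
      rw [Real.rpow_neg_one]
    simp only [smul_eq_mul]
    rw [hrp, abs_of_pos (by linarith : (0:ℝ) < 2*s)]
    field_simp
  rw [setIntegral_congr_fun measurableSet_Ioi hpt, integral_const_mul, gauss_Ioi r hr.le]
  ring

lemma Ginc_zero : Ginc 0 = Real.sqrt Real.pi := by
  have h := Real.Gamma_eq_integral (by norm_num : (0:ℝ) < 1/2)
  unfold Ginc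
  rw [show (-(1:ℝ)/2) = ((1:ℝ)/2 - 1) by norm_num, ← h, Real.Gamma_one_half_eq]

lemma Ginc_key (t : ℝ) :
    Ginc (2*Real.pi*t^2)
      = Real.sqrt Real.pi - 2 * Real.sign t * E0 (Real.sqrt (2*Real.pi) * t) := by
  have hc2 : (Real.sqrt (2*Real.pi))^2 = 2*Real.pi := Real.sq_sqrt (by positivity)
  have hcpos : 0 < Real.sqrt (2*Real.pi) := Real.sqrt_pos.2 (by positivity)
  rcases lt_trichotomy t 0 with ht|ht|ht
  · have h1 : 2*Real.pi*t^2 = (Real.sqrt (2*Real.pi) * (-t))^2 := by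
      rw [mul_pow, hc2]; ring
    rw [h1, Ginc_sq_s8 (mul_pos hcpos (neg_pos.2 ht)),
      show Real.sqrt (2*Real.pi) * (-t) = -(Real.sqrt (2*Real.pi) * t) by ring,
      E0_neg, Real.sign_of_neg ht]
    ring
  · rw [ht]
    simp [Real.sign_zero, Ginc_zero]
  · have h1 : 2*Real.pi*t^2 = (Real.sqrt (2*Real.pi) * t)^2 := by
      rw [mul_pow, hc2]
    rw [h1, Ginc_sq_s8 (mul_pos hcpos ht), Real.sign_of_pos ht]
    ring

/-- The `e₃`-component `B'` of the singular function `ψ̃'₀,₁`. -/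
noncomputable def B' (x : ℝ × ℝ) : ℝ :=
  if x.1 ^ 2 - x.2 ^ 2 > 0 then
    (1/2) * min |x.1 - x.2| |x.1 + x.2| * Real.exp (-(Real.pi * (x.1 ^ 2 - x.2 ^ 2)))
  else 0

/-- The `e₂`-component `A'` of the singular function `ψ̃'₀,₁`. -/
noncomputable def A' (x : ℝ × ℝ) : ℝ := - Real.sign (x.1 * x.2) * B' x


lemma sign_mul_abs' (t : ℝ) : Real.sign t * |t| = t := by
  rcases lt_trichotomy t 0 with ht|ht|ht
  · rw [Real.sign_of_neg ht, abs_of_neg ht]; ring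
  · simp [ht]
  · rw [Real.sign_of_pos ht, abs_of_pos ht]; ring

lemma abs_Ginc (t : ℝ) :
    |t| * Ginc (2*Real.pi*t^2)
      = Real.sqrt Real.pi * |t| - 2 * t * E0 (Real.sqrt (2*Real.pi) * t) := by
  rw [Ginc_key]
  rcases lt_trichotomy t 0 with ht|ht|ht
  · rw [Real.sign_of_neg ht, abs_of_neg ht]; ring
  · simp [ht, E0_zero]
  · rw [Real.sign_of_pos ht, abs_of_pos ht]; ring

lemma sign_Ginc (t : ℝ) :
    Real.sign t * Ginc (2*Real.pi*t^2)
      = Real.sqrt Real.pi * Real.sign t - 2 * E0 (Real.sqrt (2*Real.pi) * t) := by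
  rw [Ginc_key]
  rcases lt_trichotomy t 0 with ht|ht|ht
  · rw [Real.sign_of_neg ht]; ring
  · simp [ht, Real.sign_zero, E0_zero]
  · rw [Real.sign_of_pos ht]; ring

noncomputable def Bs (x : ℝ × ℝ) : ℝ :=
  -(1 / (2 * Real.sqrt 2 * Real.pi)) * Real.exp (-(Real.pi * (x.1 ^ 2 + x.2 ^ 2)))
  - (x.2 * E0 (Real.sqrt (2*Real.pi) * x.2) / Real.sqrt Real.pi) *
      Real.exp (-(Real.pi * (x.1 ^ 2 - x.2 ^ 2)))

noncomputable def As (x : ℝ × ℝ) : ℝ :=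
  - (x.1 * E0 (Real.sqrt (2*Real.pi) * x.2) / Real.sqrt Real.pi) *
      Real.exp (-(Real.pi * (x.1 ^ 2 - x.2 ^ 2)))

lemma sqrtpi_pos : (0:ℝ) < Real.sqrt Real.pi := Real.sqrt_pos.2 Real.pi_pos

lemma B_eq (x : ℝ × ℝ) :
    B x = Bs x + (|x.2|/2) * Real.exp (-(Real.pi * (x.1 ^ 2 - x.2 ^ 2))) := by
  have h2 : (1 / (2 * Real.sqrt Real.pi)) * |x.2| * Ginc (2 * Real.pi * x.2 ^ 2)
      = |x.2|/2 - x.2 * E0 (Real.sqrt (2*Real.pi) * x.2) / Real.sqrt Real.pi := by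
    rw [mul_assoc, abs_Ginc]
    have h := sqrtpi_pos.ne'
    field_simp
  unfold B Bs
  rw [h2]
  ring

lemma A_eq (x : ℝ × ℝ) :
    A x = As x + (x.1 * Real.sign x.2 / 2) * Real.exp (-(Real.pi * (x.1 ^ 2 - x.2 ^ 2))) := by
  have h2 : (1 / (2 * Real.sqrt Real.pi)) * x.1 * Real.sign x.2 * Ginc (2 * Real.pi * x.2 ^ 2)
      = x.1 * Real.sign x.2 / 2 - x.1 * E0 (Real.sqrt (2*Real.pi) * x.2) / Real.sqrt Real.pi := by
    rw [mul_assoc, sign_Ginc]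
    have h := sqrtpi_pos.ne'
    field_simp
  unfold A As
  rw [h2]
  ring

lemma min_abs (a b : ℝ) (h : b^2 < a^2) : min |a-b| |a+b| = |a| - |b| := by
  have hba : |b| < |a| := by
    nlinarith [abs_nonneg a, abs_nonneg b, sq_abs a, sq_abs b]
  rcases le_total 0 a with ha|ha <;> rcases le_total 0 b with hb|hb
  · rw [abs_of_nonneg ha, abs_of_nonneg hb] at hba ⊢
    rw [abs_of_pos (by linarith : (0:ℝ) < a - b), abs_of_nonneg (by linarith : (0:ℝ) ≤ a + b),
      min_eq_left (by linarith)]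
  · rw [abs_of_nonneg ha, abs_of_nonpos hb] at hba ⊢
    rw [abs_of_pos (by linarith : (0:ℝ) < a - b), abs_of_pos (by linarith : (0:ℝ) < a + b),
      min_eq_right (by linarith)]
    ring
  · rw [abs_of_nonpos ha, abs_of_nonneg hb] at hba ⊢
    rw [abs_of_neg (by linarith : a - b < 0), abs_of_neg (by linarith : a + b < 0),
      min_eq_right (by linarith)]
    ring
  · rw [abs_of_nonpos ha, abs_of_nonpos hb] at hba ⊢
    rw [abs_of_neg (by linarith : a - b < 0), abs_of_neg (by linarith : a + b < 0),
      min_eq_left (by linarith)]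
    ring

lemma sign_mul_pos_left {a : ℝ} (ha : 0 < a) (b : ℝ) : Real.sign (a * b) = Real.sign b := by
  rcases lt_trichotomy b 0 with hb|hb|hb
  · simp [Real.sign_of_neg hb, Real.sign_of_neg (mul_neg_of_pos_of_neg ha hb)]
  · simp [hb]
  · simp [Real.sign_of_pos hb, Real.sign_of_pos (mul_pos ha hb)]

lemma sign_mul_neg_left {a : ℝ} (ha : a < 0) (b : ℝ) : Real.sign (a * b) = - Real.sign b := by
  rcases lt_trichotomy b 0 with hb|hb|hb
  · simp [Real.sign_of_neg hb, Real.sign_of_pos (mul_pos_of_neg_of_neg ha hb)]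
  · simp [hb]
  · simp [Real.sign_of_pos hb, Real.sign_of_neg (mul_neg_of_neg_of_pos ha hb)]

lemma contDiff_expq : ContDiff ℝ ∞ fun x : ℝ×ℝ => Real.exp (-(Real.pi * (x.1^2 - x.2^2))) :=
  ((contDiff_const.mul ((contDiff_fst.pow 2).sub (contDiff_snd.pow 2))).neg).exp

lemma contDiff_E0c : ContDiff ℝ ∞ fun x : ℝ×ℝ => E0 (Real.sqrt (2*Real.pi) * x.2) :=
  contDiff_E0.comp (contDiff_const.mul contDiff_snd)

lemma contDiff_Bs : ContDiff ℝ ∞ Bs := by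
  unfold Bs
  exact (contDiff_const.mul
      ((contDiff_const.mul ((contDiff_fst.pow 2).add (contDiff_snd.pow 2))).neg).exp).sub
    (((contDiff_snd.mul contDiff_E0c).div_const _).mul contDiff_expq)

lemma contDiff_As : ContDiff ℝ ∞ As := by
  unfold As
  exact (((contDiff_fst.mul contDiff_E0c).div_const _).neg.mul contDiff_expq)

lemma contDiff_model (F : ℝ×ℝ → ℝ) (hF : ContDiff ℝ ∞ F) (c1 c2 : ℝ) :
    ContDiff ℝ ∞ (fun x : ℝ×ℝ =>
      F x + ((c1 * x.1 + c2 * x.2)/2) * Real.exp (-(Real.pi * (x.1^2 - x.2^2)))) :=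
  hF.add (((((contDiff_const.mul contDiff_fst)).add ((contDiff_const.mul contDiff_snd))).div_const 2).mul
    contDiff_expq)


lemma Bkey (x : ℝ × ℝ) (hx : x.1 ^ 2 ≠ x.2 ^ 2) :
    ∃ c1 c2 : ℝ, ∀ᶠ y in nhds x, B y + B' y
      = Bs y + ((c1 * y.1 + c2 * y.2)/2) * Real.exp (-(Real.pi * (y.1^2 - y.2^2))) := by
  rcases hx.lt_or_gt with h|h
  · -- q < 0
    have h2 : x.2 ≠ 0 := by
      intro h0
      rw [h0] at h
      nlinarith [sq_nonneg x.1]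
    have hopen2 : IsOpen {y : ℝ×ℝ | y.1^2 < y.2^2} :=
      isOpen_lt ((continuous_fst.pow 2)) ((continuous_snd.pow 2))
    rcases h2.lt_or_gt with hs|hs
    · refine ⟨0, -1, ?_⟩
      have hU := (hopen2.and (isOpen_lt continuous_snd continuous_const)).mem_nhds
        (show x ∈ _ from ⟨h, hs⟩)
      refine Filter.eventually_of_mem hU fun y hy => ?_
      obtain ⟨h1, h2⟩ := hy
      rw [B_eq, B', if_neg (not_lt.2 (by linarith)), abs_of_neg h2]
      ring
    · refine ⟨0, 1, ?_⟩
      have hU := (hopen2.and (isOpen_lt continuous_const continuous_snd)).mem_nhds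
        (show x ∈ _ from ⟨h, hs⟩)
      refine Filter.eventually_of_mem hU fun y hy => ?_
      obtain ⟨h1, h2⟩ := hy
      rw [B_eq, B', if_neg (not_lt.2 (by linarith)), abs_of_pos h2]
      ring
  · -- q > 0
    have h1 : x.1 ≠ 0 := by
      intro h0
      rw [h0] at h
      nlinarith [sq_nonneg x.2]
    have hopen2 : IsOpen {y : ℝ×ℝ | y.2^2 < y.1^2} :=
      isOpen_lt ((continuous_snd.pow 2)) ((continuous_fst.pow 2))
    rcases h1.lt_or_gt with hs|hs
    · refine ⟨-1, 0, ?_⟩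
      have hU := (hopen2.and (isOpen_lt continuous_fst continuous_const)).mem_nhds
        (show x ∈ _ from ⟨h, hs⟩)
      refine Filter.eventually_of_mem hU fun y hy => ?_
      obtain ⟨h1, h2⟩ := hy
      rw [B_eq, B', if_pos (show y.1^2 - y.2^2 > 0 by linarith), min_abs _ _ h1, abs_of_neg h2]
      ring
    · refine ⟨1, 0, ?_⟩
      have hU := (hopen2.and (isOpen_lt continuous_const continuous_fst)).mem_nhds
        (show x ∈ _ from ⟨h, hs⟩)
      refine Filter.eventually_of_mem hU fun y hy => ?_
      obtain ⟨h1, h2⟩ := hy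
      rw [B_eq, B', if_pos (show y.1^2 - y.2^2 > 0 by linarith), min_abs _ _ h1, abs_of_pos h2]
      ring

lemma Akey (x : ℝ × ℝ) (hx : x.1 ^ 2 ≠ x.2 ^ 2) :
    ∃ c1 c2 : ℝ, ∀ᶠ y in nhds x, A y + A' y
      = As y + ((c1 * y.1 + c2 * y.2)/2) * Real.exp (-(Real.pi * (y.1^2 - y.2^2))) := by
  rcases hx.lt_or_gt with h|h
  · -- q < 0
    have h2 : x.2 ≠ 0 := by
      intro h0
      rw [h0] at h
      nlinarith [sq_nonneg x.1]
    have hopen2 : IsOpen {y : ℝ×ℝ | y.1^2 < y.2^2} :=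
      isOpen_lt ((continuous_fst.pow 2)) ((continuous_snd.pow 2))
    rcases h2.lt_or_gt with hs|hs
    · refine ⟨-1, 0, ?_⟩
      have hU := (hopen2.and (isOpen_lt continuous_snd continuous_const)).mem_nhds
        (show x ∈ _ from ⟨h, hs⟩)
      refine Filter.eventually_of_mem hU fun y hy => ?_
      obtain ⟨h1, h2⟩ := hy
      rw [A_eq, A', B', if_neg (not_lt.2 (by linarith)), Real.sign_of_neg h2]
      ring
    · refine ⟨1, 0, ?_⟩
      have hU := (hopen2.and (isOpen_lt continuous_const continuous_snd)).mem_nhds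
        (show x ∈ _ from ⟨h, hs⟩)
      refine Filter.eventually_of_mem hU fun y hy => ?_
      obtain ⟨h1, h2⟩ := hy
      rw [A_eq, A', B', if_neg (not_lt.2 (by linarith)), Real.sign_of_pos h2]
      ring
  · -- q > 0
    have h1 : x.1 ≠ 0 := by
      intro h0
      rw [h0] at h
      nlinarith [sq_nonneg x.2]
    have hopen2 : IsOpen {y : ℝ×ℝ | y.2^2 < y.1^2} :=
      isOpen_lt ((continuous_snd.pow 2)) ((continuous_fst.pow 2))
    rcases h1.lt_or_gt with hs|hs
    · refine ⟨0, -1, ?_⟩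
      have hU := (hopen2.and (isOpen_lt continuous_fst continuous_const)).mem_nhds
        (show x ∈ _ from ⟨h, hs⟩)
      refine Filter.eventually_of_mem hU fun y hy => ?_
      obtain ⟨h1, h2⟩ := hy
      rw [A_eq, A', B', if_pos (show y.1^2 - y.2^2 > 0 by linarith), min_abs _ _ h1,
        sign_mul_neg_left h2, abs_of_neg h2]
      linear_combination (-(Real.exp (-(Real.pi * (y.1^2 - y.2^2))))/2) * sign_mul_abs' y.2
    · refine ⟨0, 1, ?_⟩
      have hU := (hopen2.and (isOpen_lt continuous_const continuous_fst)).mem_nhds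
        (show x ∈ _ from ⟨h, hs⟩)
      refine Filter.eventually_of_mem hU fun y hy => ?_
      obtain ⟨h1, h2⟩ := hy
      rw [A_eq, A', B', if_pos (show y.1^2 - y.2^2 > 0 by linarith), min_abs _ _ h1,
        sign_mul_pos_left h2, abs_of_pos h2]
      linear_combination ((Real.exp (-(Real.pi * (y.1^2 - y.2^2))))/2) * sign_mul_abs' y.2


/-- Paper Proposition 5.10(i),(ii): `B + B'` is `C²` and `A + A'` is `C¹` on the
complement of the light-cone `{x : x₂² ≠ x₃²}`. -/
theorem stmt8 :
    ContDiffOn ℝ 2 (fun x : ℝ × ℝ => B x + B' x) {x : ℝ × ℝ | x.1 ^ 2 ≠ x.2 ^ 2} ∧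
    ContDiffOn ℝ 1 (fun x : ℝ × ℝ => A x + A' x) {x : ℝ × ℝ | x.1 ^ 2 ≠ x.2 ^ 2} := by
  constructor
  · intro x hx
    obtain ⟨c1, c2, hev⟩ := Bkey x hx
    exact (((contDiff_model Bs contDiff_Bs c1 c2).of_le
      (by exact_mod_cast ENat.natCast_le_of_coe_top_le_withTop le_rfl 2)).contDiffAt.congr_of_eventuallyEq hev).contDiffWithinAt
  · intro x hx
    obtain ⟨c1, c2, hev⟩ := Akey x hx
    exact (((contDiff_model As contDiff_As c1 c2).of_le
      (by exact_mod_cast ENat.natCast_le_of_coe_top_le_withTop le_rfl 1)).contDiffAt.congr_of_eventuallyEq hev).contDiffWithinAt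
end
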